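/- Suppose Q ∈ C¹([0,T)×[0,1]) and N ∈ C([0,T)) with N positive satisfy ∂_τQ(τ,η) + ∂_ηQ(τ,η) = 1/N(τ) + K(Q(τ,η)) for τ ∈ (0,T), η ∈ (0,1), together with the constraint K(Φ_F) < ∂_ηQ(τ,1) < ∞ for all τ ∈ [0,T), and the initial datum satisfies Q(0,1) = Φ_F. Then the following two statements are equivalent: (a) 1/N(τ) = ∂_ηQ(τ,1) − K(Φ_F) for all τ ∈ [0,T); (b) Q(τ,1) = Φ_F for all τ ∈ [0,T). -/

import Mathlib

/-!
Since `Q` is `C¹` up to the boundary, the equation extends by continuity to `η = 1` and to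
`τ = 0`, where it reads `d/dτ Q(τ,1) = 1/N(τ) + K(Q(τ,1)) - ∂_η Q(τ,1)`. Under (a) this says that
`g(τ) = Q(τ,1)` solves `g' = K(g) - K(Φ_F)` with `g(0) = Φ_F`; as `K` is Lipschitz, the constant
`Φ_F` is the only such solution. Under (b) the left-hand side vanishes, which is (a).
-/

open Real Set MeasureTheory Filter Topology
open scoped ENNReal

noncomputable section

/-- The time interval `[0, T)` in `ℝ`, where `T : ℝ≥0∞` may be `∞`. -/
def Ico0 (T : ℝ≥0∞) : Set ℝ := {τ : ℝ | 0 ≤ τ ∧ ENNReal.ofReal τ < T}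

/-- Partial derivative in the time variable (one-sided at `τ = 0`). -/
def pdTau (Q : ℝ → ℝ → ℝ) (τ η : ℝ) : ℝ := derivWithin (fun s => Q s η) (Ici 0) τ

/-- Partial derivative in the spatial variable (one-sided at `η = 0` and `η = 1`). -/
def pdEta (Q : ℝ → ℝ → ℝ) (τ η : ℝ) : ℝ := derivWithin (fun x => Q τ x) (Icc 0 1) η

/-- Assumption 1.1: `K ∈ C²(ℝ)` with `K'`, `K''` bounded on `ℝ` and `K > 0` on `[0, Φ_F]`. -/
structure KAssump (K : ℝ → ℝ) (ΦF : ℝ) : Prop where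
  smooth : ContDiff ℝ 2 K
  bdd1 : ∃ C : ℝ, ∀ x : ℝ, |deriv K x| ≤ C
  bdd2 : ∃ C : ℝ, ∀ x : ℝ, |deriv (deriv K) x| ≤ C
  pos : ∀ φ ∈ Icc (0 : ℝ) ΦF, 0 < K φ

/-- `k_min := K'(0) + ∫₀^{Φ_F} min(K''(φ), 0) dφ`. -/
def kmin (K : ℝ → ℝ) (ΦF : ℝ) : ℝ :=
  deriv K 0 + ∫ φ in (0 : ℝ)..ΦF, min (deriv (deriv K) φ) 0

/-- `k_max := K'(0) + ∫₀^{Φ_F} max(K''(φ), 0) dφ`. -/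
def kmax (K : ℝ → ℝ) (ΦF : ℝ) : ℝ :=
  deriv K 0 + ∫ φ in (0 : ℝ)..ΦF, max (deriv (deriv K) φ) 0

/-- Assumption (A2) on the initial datum. -/
structure A2 (K : ℝ → ℝ) (ΦF : ℝ) (Qinit : ℝ → ℝ) : Prop where
  reg : ContDiffOn ℝ 1 Qinit (Icc 0 1)
  mono : MonotoneOn Qinit (Icc 0 1)
  init0 : Qinit 0 = 0
  init1 : Qinit 1 = ΦF
  deriv1 : K ΦF < derivWithin Qinit (Icc 0 1) 1
  compat : derivWithin Qinit (Icc 0 1) 1 - derivWithin Qinit (Icc 0 1) 0 = K ΦF - K 0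

/-- A classical solution `(Q, N)` of the Q-system on `[0, T)` with initial datum `Qinit`. -/
structure IsQSol (K : ℝ → ℝ) (ΦF : ℝ) (T : ℝ≥0∞) (Qinit : ℝ → ℝ)
    (Q : ℝ → ℝ → ℝ) (N : ℝ → ℝ) : Prop where
  initReg : ContDiffOn ℝ 1 Qinit (Icc 0 1)
  initMono : MonotoneOn Qinit (Icc 0 1)
  init0 : Qinit 0 = 0
  init1 : Qinit 1 = ΦF
  initDeriv : K ΦF < derivWithin Qinit (Icc 0 1) 1
  reg : ContDiffOn ℝ 1 (Function.uncurry Q) (Ico0 T ×ˢ Icc (0 : ℝ) 1)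
  mono : ∀ τ ∈ Ico0 T, MonotoneOn (Q τ) (Icc 0 1)
  Ncont : ContinuousOn N (Ico0 T)
  Npos : ∀ τ ∈ Ico0 T, 0 < N τ
  pde : ∀ τ ∈ Ico0 T, ∀ η ∈ Ioo (0 : ℝ) 1,
    pdTau Q τ η + pdEta Q τ η = 1 / N τ + K (Q τ η)
  bc : ∀ τ ∈ Ico0 T, Q τ 0 = 0
  Ndef : ∀ τ ∈ Ico0 T, 1 / N τ = pdEta Q τ 1 - K ΦF
  init : ∀ η ∈ Icc (0 : ℝ) 1, Q 0 η = Qinit η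
  constraint : ∀ τ ∈ Ico0 T, K ΦF < pdEta Q τ 1

/-- A classical solution `(Q, Ñ)` of the relaxed system on `[0, T)` with initial datum `Qinit`,
where `Ñ` is unconstrained in sign. -/
structure IsRelaxedSol (K : ℝ → ℝ) (ΦF : ℝ) (T : ℝ≥0∞) (Qinit : ℝ → ℝ)
    (Q : ℝ → ℝ → ℝ) (Ntil : ℝ → ℝ) : Prop where
  initReg : ContDiffOn ℝ 1 Qinit (Icc 0 1)
  init0 : Qinit 0 = 0
  init1 : Qinit 1 = ΦF
  reg : ContDiffOn ℝ 1 (Function.uncurry Q) (Ico0 T ×ˢ Icc (0 : ℝ) 1)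
  Ncont : ContinuousOn Ntil (Ico0 T)
  pde : ∀ τ ∈ Ico0 T, ∀ η ∈ Ioo (0 : ℝ) 1,
    pdTau Q τ η + pdEta Q τ η = Ntil τ + K (Q τ η)
  bc : ∀ τ ∈ Ico0 T, Q τ 0 = 0
  Ndef : ∀ τ ∈ Ico0 T, Ntil τ = pdEta Q τ 1 - K ΦF
  init : ∀ η ∈ Icc (0 : ℝ) 1, Q 0 η = Qinit η

/-- A steady state `(Q*, N*)` of the Q-system. -/
def IsSteadyState (K : ℝ → ℝ) (ΦF : ℝ) (Qs : ℝ → ℝ) (Ns : ℝ) : Prop :=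
  ContDiffOn ℝ 1 Qs (Icc 0 1) ∧ 0 < Ns ∧
    (∀ η ∈ Icc (0 : ℝ) 1, derivWithin Qs (Icc 0 1) η = K (Qs η) + 1 / Ns) ∧
    Qs 0 = 0 ∧ Qs 1 = ΦF

/-- `P₀ f := f - ∫₀¹ f`. -/
def P0 (f : ℝ → ℝ) (η : ℝ) : ℝ := f η - ∫ x in (0 : ℝ)..1, f x

/-- `H_init := Q_init' - K ∘ Q_init` (derivative within `[0,1]`). -/
def Hinit (K : ℝ → ℝ) (Qinit : ℝ → ℝ) (η : ℝ) : ℝ :=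
  derivWithin Qinit (Icc 0 1) η - K (Qinit η)

lemma ordConnected_Ico0 (T : ℝ≥0∞) : (Ico0 T).OrdConnected :=
  ⟨fun _ hx _ hy _ hz => ⟨hx.1.trans hz.1, (ENNReal.ofReal_le_ofReal hz.2).trans_lt hy.2⟩⟩

lemma isOpen_setOf_ofReal_lt (T : ℝ≥0∞) : IsOpen {τ : ℝ | ENNReal.ofReal τ < T} :=
  isOpen_lt ENNReal.continuous_ofReal continuous_const

lemma Ico0_eq_Ici_inter (T : ℝ≥0∞) : Ico0 T = Ici 0 ∩ {τ : ℝ | ENNReal.ofReal τ < T} := rfl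

lemma uniqueDiffOn_Ico0 (T : ℝ≥0∞) : UniqueDiffOn ℝ (Ico0 T) :=
  (uniqueDiffOn_Ici 0).inter (isOpen_setOf_ofReal_lt T)

lemma nhdsWithin_Ici_zero_eq_nhdsWithin_Ico0 {T : ℝ≥0∞} {τ : ℝ} (hτ : τ ∈ Ico0 T) :
    𝓝[Ici 0] τ = 𝓝[Ico0 T] τ :=
  (nhdsWithin_restrict' _ ((isOpen_setOf_ofReal_lt T).mem_nhds hτ.2)).trans rfl

lemma Ico0_subset_closure_inter_Ioi (T : ℝ≥0∞) : Ico0 T ⊆ closure (Ico0 T ∩ Ioi 0) := by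
  calc Ico0 T = {τ : ℝ | ENNReal.ofReal τ < T} ∩ closure (Ioi 0) := by
        rw [closure_Ioi, Ico0_eq_Ici_inter, inter_comm]
    _ ⊆ closure ({τ : ℝ | ENNReal.ofReal τ < T} ∩ Ioi 0) :=
        (isOpen_setOf_ofReal_lt T).inter_closure
    _ ⊆ closure (Ico0 T ∩ Ioi 0) := closure_mono fun _ hx => ⟨⟨le_of_lt hx.2, hx.1⟩, hx.2⟩

lemma zero_mem_Ico0_of_mem {T : ℝ≥0∞} {τ : ℝ} (hτ : τ ∈ Ico0 T) : (0 : ℝ) ∈ Ico0 T :=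
  ⟨le_rfl, by simpa using bot_le.trans_lt hτ.2⟩

lemma Icc_zero_subset_Ico0 {T : ℝ≥0∞} {τ : ℝ} (hτ : τ ∈ Ico0 T) : Icc 0 τ ⊆ Ico0 T :=
  (ordConnected_Ico0 T).out (zero_mem_Ico0_of_mem hτ) hτ

lemma HasFDerivWithinAt.hasDerivWithinAt_uncurry_left {E : Type*} [NormedAddCommGroup E]
    [NormedSpace ℝ E] {f : ℝ → ℝ → E} {L : ℝ × ℝ →L[ℝ] E} {s t : Set ℝ} {x y : ℝ}
    (hf : HasFDerivWithinAt (Function.uncurry f) L (s ×ˢ t) (x, y)) (hy : y ∈ t) :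
    HasDerivWithinAt (fun a => f a y) (L (1, 0)) s x :=
  hf.comp_hasDerivWithinAt (f := fun a => (a, y)) x
    ((hasDerivAt_id' x).prodMk (hasDerivAt_const x y)).hasDerivWithinAt
    fun _ ha => mk_mem_prod ha hy

lemma HasFDerivWithinAt.hasDerivWithinAt_uncurry_right {E : Type*} [NormedAddCommGroup E]
    [NormedSpace ℝ E] {f : ℝ → ℝ → E} {L : ℝ × ℝ →L[ℝ] E} {s t : Set ℝ} {x y : ℝ}
    (hf : HasFDerivWithinAt (Function.uncurry f) L (s ×ˢ t) (x, y)) (hx : x ∈ s) :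
    HasDerivWithinAt (fun b => f x b) (L (0, 1)) t y :=
  hf.comp_hasDerivWithinAt (f := fun b => (x, b)) y
    ((hasDerivAt_const y x).prodMk (hasDerivAt_id' y)).hasDerivWithinAt
    fun _ hb => mk_mem_prod hx hb

section PartialDerivatives

variable {Q : ℝ → ℝ → ℝ} {T : ℝ≥0∞} {τ η : ℝ}

lemma hasDerivWithinAt_fderivWithin_apply_one_zero
    (hreg : ContDiffOn ℝ 1 (Function.uncurry Q) (Ico0 T ×ˢ Icc (0 : ℝ) 1))
    (hτ : τ ∈ Ico0 T) (hη : η ∈ Icc (0 : ℝ) 1) :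
    HasDerivWithinAt (fun s => Q s η)
      (fderivWithin ℝ (Function.uncurry Q) (Ico0 T ×ˢ Icc (0 : ℝ) 1) (τ, η) (1, 0)) (Ici 0) τ :=
  (((hreg.differentiableOn one_ne_zero) _ ⟨hτ, hη⟩).hasFDerivWithinAt.hasDerivWithinAt_uncurry_left
    hη).mono_of_mem_nhdsWithin
    (by rw [nhdsWithin_Ici_zero_eq_nhdsWithin_Ico0 hτ]; exact self_mem_nhdsWithin)

lemma hasDerivWithinAt_pdTau
    (hreg : ContDiffOn ℝ 1 (Function.uncurry Q) (Ico0 T ×ˢ Icc (0 : ℝ) 1))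
    (hτ : τ ∈ Ico0 T) (hη : η ∈ Icc (0 : ℝ) 1) :
    HasDerivWithinAt (fun s => Q s η) (pdTau Q τ η) (Ici 0) τ :=
  (hasDerivWithinAt_fderivWithin_apply_one_zero hreg hτ hη).differentiableWithinAt.hasDerivWithinAt

lemma pdTau_eq_fderivWithin
    (hreg : ContDiffOn ℝ 1 (Function.uncurry Q) (Ico0 T ×ˢ Icc (0 : ℝ) 1))
    (hτ : τ ∈ Ico0 T) (hη : η ∈ Icc (0 : ℝ) 1) :
    pdTau Q τ η =
      fderivWithin ℝ (Function.uncurry Q) (Ico0 T ×ˢ Icc (0 : ℝ) 1) (τ, η) (1, 0) :=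
  (hasDerivWithinAt_fderivWithin_apply_one_zero hreg hτ hη).derivWithin (uniqueDiffOn_Ici 0 τ hτ.1)

lemma pdEta_eq_fderivWithin
    (hreg : ContDiffOn ℝ 1 (Function.uncurry Q) (Ico0 T ×ˢ Icc (0 : ℝ) 1))
    (hτ : τ ∈ Ico0 T) (hη : η ∈ Icc (0 : ℝ) 1) :
    pdEta Q τ η =
      fderivWithin ℝ (Function.uncurry Q) (Ico0 T ×ˢ Icc (0 : ℝ) 1) (τ, η) (0, 1) :=
  (((hreg.differentiableOn one_ne_zero) _ ⟨hτ, hη⟩).hasFDerivWithinAt.hasDerivWithinAt_uncurry_right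
    hτ).derivWithin (uniqueDiffOn_Icc zero_lt_one η hη)

lemma pdTau_eq_zero_of_eqOn {c : ℝ} (hτ : τ ∈ Ico0 T) (h : ∀ s ∈ Ico0 T, Q s η = c) :
    pdTau Q τ η = 0 := by
  have hev : (fun s => Q s η) =ᶠ[𝓝[Ici 0] τ] fun _ => c := by
    rw [nhdsWithin_Ici_zero_eq_nhdsWithin_Ico0 hτ]
    exact eventually_mem_nhdsWithin.mono h
  rw [pdTau, hev.derivWithin_eq (h τ hτ), derivWithin_fun_const]
  rfl

theorem pde_extends_to_closure {F K : ℝ → ℝ}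
    (hreg : ContDiffOn ℝ 1 (Function.uncurry Q) (Ico0 T ×ˢ Icc (0 : ℝ) 1))
    (hF : ContinuousOn F (Ico0 T)) (hK : Continuous K)
    (hpde : ∀ τ ∈ Ico0 T, 0 < τ → ∀ η ∈ Ioo (0 : ℝ) 1,
      pdTau Q τ η + pdEta Q τ η = F τ + K (Q τ η)) :
    ∀ τ ∈ Ico0 T, ∀ η ∈ Icc (0 : ℝ) 1, pdTau Q τ η + pdEta Q τ η = F τ + K (Q τ η) := by
  set S := Ico0 T ×ˢ Icc (0 : ℝ) 1
  set D := fderivWithin ℝ (Function.uncurry Q) S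
  have hD : ContinuousOn D S :=
    hreg.continuousOn_fderivWithin ((uniqueDiffOn_Ico0 T).prod (uniqueDiffOn_Icc zero_lt_one))
      le_rfl
  have key : EqOn (fun p => D p (1, 0) + D p (0, 1)) (fun p => F p.1 + K (Function.uncurry Q p))
      S := by
    refine EqOn.of_subset_closure (s := (Ico0 T ∩ Ioi 0) ×ˢ Ioo 0 1) ?_
      ((hD.clm_apply continuousOn_const).add (hD.clm_apply continuousOn_const))
      ((hF.comp continuousOn_fst fun _ hp => hp.1).add (hK.comp_continuousOn hreg.continuousOn))
      (prod_mono inter_subset_left Ioo_subset_Icc_self) ?_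
    · rintro ⟨τ, η⟩ ⟨⟨hτ, hτpos⟩, hη⟩
      have hη' := Ioo_subset_Icc_self hη
      have := hpde τ hτ hτpos η hη
      rw [pdTau_eq_fderivWithin hreg hτ hη', pdEta_eq_fderivWithin hreg hτ hη'] at this
      exact this
    · rw [closure_prod_eq, closure_Ioo zero_ne_one]
      exact prod_mono (Ico0_subset_closure_inter_Ioi T) subset_rfl
  intro τ hτ η hη
  rw [pdTau_eq_fderivWithin hreg hτ hη, pdEta_eq_fderivWithin hreg hτ hη]
  exact key ⟨hτ, hη⟩

end PartialDerivatives

lemma KAssump.exists_lipschitzWith {K : ℝ → ℝ} {ΦF : ℝ} (hK : KAssump K ΦF) :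
    ∃ L, LipschitzWith L K := by
  obtain ⟨C, hC⟩ := hK.bdd1
  refine ⟨C.toNNReal, lipschitzWith_of_nnnorm_deriv_le (hK.smooth.differentiable two_ne_zero)
    fun x => ?_⟩
  rw [← NNReal.coe_le_coe, coe_nnnorm, Real.norm_eq_abs]
  exact (hC x).trans (Real.le_coe_toNNReal C)

theorem LipschitzWith.eqOn_const_of_hasDerivWithinAt {K g : ℝ → ℝ} {L : NNReal}
    (hK : LipschitzWith L K) {a b c : ℝ} (hg : ContinuousOn g (Icc a b))
    (hg' : ∀ t ∈ Ico a b, HasDerivWithinAt g (K (g t) - K c) (Ici t) t) (ha : g a = c) :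
    EqOn g (fun _ => c) (Icc a b) :=
  ODE_solution_unique (v := fun _ x => K x - K c) (fun _ => hK.sub (LipschitzWith.const _)) hg hg'
    continuousOn_const (fun t _ => by simpa using hasDerivWithinAt_const t (Ici t) c) ha

theorem stmt1_general (ΦF : ℝ) (K : ℝ → ℝ) (hK : KAssump K ΦF)
    (T : ℝ≥0∞) (Q : ℝ → ℝ → ℝ) (N : ℝ → ℝ)
    (hreg : ContDiffOn ℝ 1 (Function.uncurry Q) (Ico0 T ×ˢ Icc (0 : ℝ) 1))
    (hNcont : ContinuousOn N (Ico0 T))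
    (hNpos : ∀ τ ∈ Ico0 T, 0 < N τ)
    (hpde : ∀ τ ∈ Ico0 T, 0 < τ → ∀ η ∈ Ioo (0 : ℝ) 1,
      pdTau Q τ η + pdEta Q τ η = 1 / N τ + K (Q τ η))
    (hinit1 : Q 0 1 = ΦF) :
    (∀ τ ∈ Ico0 T, 1 / N τ = pdEta Q τ 1 - K ΦF) ↔ (∀ τ ∈ Ico0 T, Q τ 1 = ΦF) := by
  have hbdry := pde_extends_to_closure (F := fun τ => 1 / N τ) hreg
    (continuousOn_const.div hNcont fun τ hτ => (hNpos τ hτ).ne') hK.smooth.continuous hpde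
  have h1 : (1 : ℝ) ∈ Icc (0 : ℝ) 1 := right_mem_Icc.2 zero_le_one
  constructor
  · intro hN b hb
    obtain ⟨L, hL⟩ := hK.exists_lipschitzWith
    refine hL.eqOn_const_of_hasDerivWithinAt (g := fun s => Q s 1) ?_ (fun t ht => ?_) hinit1
      ⟨hb.1, le_rfl⟩
    · exact hreg.continuousOn.comp (continuous_id.prodMk continuous_const).continuousOn
        fun τ hτ => ⟨Icc_zero_subset_Ico0 hb hτ, h1⟩
    · have htT := Icc_zero_subset_Ico0 hb (Ico_subset_Icc_self ht)
      refine ((hasDerivWithinAt_pdTau hreg htT h1).mono (Ici_subset_Ici.2 ht.1)).congr_deriv ?_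
      linarith [hbdry t htT 1 h1, hN t htT]
  · intro hQ τ hτ
    have := hbdry τ hτ 1 h1
    rw [pdTau_eq_zero_of_eqOn hτ hQ, hQ τ hτ] at this
    linarith

/-- Proposition 2.2: the definition of `N` via the boundary derivative is equivalent to the
hidden boundary condition `Q(τ,1) = Φ_F`. -/
theorem stmt1 (ΦF : ℝ) (hΦF : 0 < ΦF) (K : ℝ → ℝ) (hK : KAssump K ΦF)
    (T : ℝ≥0∞) (hT : 0 < T) (Q : ℝ → ℝ → ℝ) (N : ℝ → ℝ)
    (hreg : ContDiffOn ℝ 1 (Function.uncurry Q) (Ico0 T ×ˢ Icc (0 : ℝ) 1))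
    (hNcont : ContinuousOn N (Ico0 T))
    (hNpos : ∀ τ ∈ Ico0 T, 0 < N τ)
    (hpde : ∀ τ ∈ Ico0 T, 0 < τ → ∀ η ∈ Ioo (0 : ℝ) 1,
      pdTau Q τ η + pdEta Q τ η = 1 / N τ + K (Q τ η))
    (hcons : ∀ τ ∈ Ico0 T, K ΦF < pdEta Q τ 1)
    (hinit1 : Q 0 1 = ΦF) :
    (∀ τ ∈ Ico0 T, 1 / N τ = pdEta Q τ 1 - K ΦF) ↔ (∀ τ ∈ Ico0 T, Q τ 1 = ΦF) :=
  stmt1_general ΦF K hK T Q N hreg hNcont hNpos hpde hinit1
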